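/- Under the setting of the previous statement, if μ* ∈ F minimizes μ ↦ (1/N)∑ᵢ L(y_i, f_μ(x_i)) + ‖μ‖_F over F, then f_{μ*} minimizes f ↦ (1/N)∑ᵢ L(y_i, f(x_i)) + ‖f‖_B over B, and moreover ‖f_{μ*}‖_B = ‖μ*‖_F. -/

import Mathlib

/-!
If `g μ = g μ*`, the two parameters have the same data-fitting term `R`, so minimality of `μ*`
forces `‖μ*‖ ≤ ‖μ‖`: the infimum defining the `B`-norm of `g μ*` is attained at `μ*`. For any
other representation `f = g ν`, minimality against `ν` bounds the objective at `g μ*` by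
`R f + ‖ν‖`, and taking the infimum over `ν` gives minimality over `B`.
-/

section RepresentationNorm

variable {F B : Type*} [Norm F]

/-- The paper's `‖f‖_B`; off the range of `g` the infimum is over `∅` and equals `0`. -/
noncomputable def reprNorm (g : F → B) (f : B) : ℝ :=
  sInf {c : ℝ | ∃ μ : F, f = g μ ∧ c = ‖μ‖}

variable {g : F → B} {R : B → ℝ} {μ : F}

theorem norm_le_norm_of_isMin (hmin : ∀ ν : F, R (g μ) + ‖μ‖ ≤ R (g ν) + ‖ν‖)
    {ν : F} (hν : g μ = g ν) : ‖μ‖ ≤ ‖ν‖ := by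
  have := hmin ν
  rw [← hν] at this
  linarith

theorem reprNorm_eq_norm_of_isMin (hmin : ∀ ν : F, R (g μ) + ‖μ‖ ≤ R (g ν) + ‖ν‖) :
    reprNorm g (g μ) = ‖μ‖ :=
  IsLeast.csInf_eq ⟨⟨μ, rfl, rfl⟩, by
    rintro c ⟨ν, hν, rfl⟩
    exact norm_le_norm_of_isMin hmin hν⟩

theorem add_norm_le_add_reprNorm_of_isMin (hmin : ∀ ν : F, R (g μ) + ‖μ‖ ≤ R (g ν) + ‖ν‖)
    {f : B} (hf : ∃ ν, f = g ν) : R (g μ) + ‖μ‖ ≤ R f + reprNorm g f := by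
  obtain ⟨ν₀, hν₀⟩ := hf
  have hbound : R (g μ) + ‖μ‖ - R f ≤ reprNorm g f := by
    refine le_csInf ⟨‖ν₀‖, ν₀, hν₀, rfl⟩ ?_
    rintro c ⟨ν, rfl, rfl⟩
    linarith [hmin ν]
  linarith

end RepresentationNorm

theorem stmt_15_general {X : Type*} {F E : Type*}
    [NormedAddCommGroup F] [NormedSpace ℝ F]
    [NormedAddCommGroup E] [NormedSpace ℝ E]
    (φ : X → (F →L[ℝ] E)) (L : E → E → ℝ)
    (N : ℕ) (x : Fin N → X) (y : Fin N → E) (μstar : F)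
    (hmin : ∀ ν : F,
      (N : ℝ)⁻¹ * ∑ i : Fin N, L (y i) (φ (x i) μstar) + ‖μstar‖ ≤
        (N : ℝ)⁻¹ * ∑ i : Fin N, L (y i) (φ (x i) ν) + ‖ν‖) :
    sInf {c : ℝ | ∃ μ : F, (fun x => φ x μstar) = (fun x => φ x μ) ∧ c = ‖μ‖}
        = ‖μstar‖ ∧
    ∀ f : X → E, (∃ μ : F, f = fun x => φ x μ) →
      (N : ℝ)⁻¹ * ∑ i : Fin N, L (y i) (φ (x i) μstar) +
          sInf {c : ℝ | ∃ μ : F, (fun x => φ x μstar) = (fun x => φ x μ) ∧ c = ‖μ‖} ≤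
        (N : ℝ)⁻¹ * ∑ i : Fin N, L (y i) (f (x i)) +
          sInf {c : ℝ | ∃ μ : F, f = (fun x => φ x μ) ∧ c = ‖μ‖} := by
  let g : F → X → E := fun μ x => φ x μ
  let R : (X → E) → ℝ := fun f => (N : ℝ)⁻¹ * ∑ i : Fin N, L (y i) (f (x i))
  have hnorm : reprNorm g (g μstar) = ‖μstar‖ := reprNorm_eq_norm_of_isMin (R := R) hmin
  refine ⟨hnorm, fun f hf => ?_⟩
  have hopt := add_norm_le_add_reprNorm_of_isMin (R := R) hmin hf
  rw [← hnorm] at hopt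
  exact hopt

/-- If μ* minimizes the training objective over F, then f_{μ*} minimizes the
    abstract training problem over B, and ‖f_{μ*}‖_B = ‖μ*‖_F. -/
theorem stmt_15 {X : Type*} {F E : Type*}
    [NormedAddCommGroup F] [NormedSpace ℝ F] [CompleteSpace F]
    [NormedAddCommGroup E] [NormedSpace ℝ E] [CompleteSpace E]
    (φ : X → (F →L[ℝ] E)) (L : E → E → ℝ)
    (N : ℕ) (x : Fin N → X) (y : Fin N → E) (μstar : F)
    (hmin : ∀ ν : F,
      (N : ℝ)⁻¹ * ∑ i : Fin N, L (y i) (φ (x i) μstar) + ‖μstar‖ ≤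
        (N : ℝ)⁻¹ * ∑ i : Fin N, L (y i) (φ (x i) ν) + ‖ν‖) :
    sInf {c : ℝ | ∃ μ : F, (fun x => φ x μstar) = (fun x => φ x μ) ∧ c = ‖μ‖}
        = ‖μstar‖ ∧
    ∀ f : X → E, (∃ μ : F, f = fun x => φ x μ) →
      (N : ℝ)⁻¹ * ∑ i : Fin N, L (y i) (φ (x i) μstar) +
          sInf {c : ℝ | ∃ μ : F, (fun x => φ x μstar) = (fun x => φ x μ) ∧ c = ‖μ‖} ≤
        (N : ℝ)⁻¹ * ∑ i : Fin N, L (y i) (f (x i)) +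
          sInf {c : ℝ | ∃ μ : F, f = (fun x => φ x μ) ∧ c = ‖μ‖} :=
  stmt_15_general φ L N x y μstar hmin
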